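/- Let s_β, s_λ > 0 with s_β·s_λ < 1, β₀ ∈ ℝ, λ₀ ∈ ℝ. Then the marginal proximal cost m(λ) = inf over β ∈ ℝ of [λ|β| + (β−β₀)²/(2s_β) + (λ−λ₀)²/(2s_λ)] is a convex function of λ on [0,∞). -/

import Mathlib

/-!
Writing `F(λ, β) = Q(λ, |β|) + (β₀² - 2β₀β) / (2s_β)` with
`Q(λ, t) = λt + t² / (2s_β) + (λ - λ₀)² / (2s_λ)`, the quadratic `Q` is convex on `ℝ²`
because its quadratic part `λt + t²/(2s_β) + λ²/(2s_λ)` is positive semidefinite exactly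
when `s_β s_λ ≤ 1`, and `Q` is nondecreasing in `t ≥ 0` when `λ ≥ 0`. Since `|·|` is convex,
`F` is jointly convex on `[0, ∞) × ℝ`, and minimizing a jointly convex function over one
variable preserves convexity.
-/

open Set Function

theorem ConvexOn.ciInf_snd {E F : Type*} [AddCommMonoid E] [AddCommMonoid F] [Module ℝ E]
    [Module ℝ F] [Nonempty F] {s : Set E} {f : E → F → ℝ}
    (hf : ConvexOn ℝ (s ×ˢ univ) (uncurry f)) (hbdd : ∀ x ∈ s, BddBelow (range (f x))) :
    ConvexOn ℝ s fun x => ⨅ y, f x y := by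
  have hs : Convex ℝ s := by
    simpa [fst_image_prod s univ_nonempty] using hf.1.linear_image (LinearMap.fst ℝ E F)
  refine ⟨hs, fun x hx x' hx' a b ha hb hab => ?_⟩
  simp only [smul_eq_mul, Real.mul_iInf_of_nonneg ha, Real.mul_iInf_of_nonneg hb]
  refine le_ciInf_add_ciInf fun y y' => ?_
  calc ⨅ z, f (a • x + b • x') z ≤ f (a • x + b • x') (a • y + b • y') :=
        ciInf_le (hbdd _ (hs hx hx' ha hb hab)) _
    _ ≤ a * f x y + b * f x' y' := hf.2 (mk_mem_prod hx (mem_univ y))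
        (mk_mem_prod hx' (mem_univ y')) ha hb hab

lemma quadratic_nonneg_of_mul_le_one {sβ sl : ℝ} (hsβ : 0 < sβ) (hsl : 0 < sl)
    (hprod : sβ * sl ≤ 1) (d e : ℝ) : 0 ≤ d * e + e ^ 2 / (2 * sβ) + d ^ 2 / (2 * sl) := by
  have hsum : 0 ≤ sβ * (d + sl * e) ^ 2 + sl * (1 - sβ * sl) * e ^ 2 := by
    have := sub_nonneg.2 hprod
    positivity
  have hdiv : d * e + e ^ 2 / (2 * sβ) + d ^ 2 / (2 * sl)
      = (sβ * (d + sl * e) ^ 2 + sl * (1 - sβ * sl) * e ^ 2) / (2 * sβ * sl) := by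
    field_simp
    ring
  rw [hdiv]
  positivity

lemma convexOn_mul_add_sq {sβ sl : ℝ} (hsβ : 0 < sβ) (hsl : 0 < sl) (hprod : sβ * sl ≤ 1)
    (l0 : ℝ) :
    ConvexOn ℝ univ
      fun z : ℝ × ℝ => z.1 * z.2 + z.2 ^ 2 / (2 * sβ) + (z.1 - l0) ^ 2 / (2 * sl) := by
  refine ⟨convex_univ, ?_⟩
  rintro ⟨x, t⟩ - ⟨y, u⟩ - a b ha hb hab
  obtain rfl : b = 1 - a := by linarith
  have hgap := mul_nonneg (mul_nonneg ha hb)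
    (quadratic_nonneg_of_mul_le_one hsβ hsl hprod (x - y) (t - u))
  simp only [Prod.smul_mk, Prod.mk_add_mk, smul_eq_mul]
  linear_combination hgap

noncomputable def proxCost (sβ sl β₀ l0 lam β : ℝ) : ℝ :=
  lam * |β| + (β - β₀) ^ 2 / (2 * sβ) + (lam - l0) ^ 2 / (2 * sl)

lemma proxCost_eq (sβ sl β₀ l0 lam β : ℝ) :
    proxCost sβ sl β₀ l0 lam β
      = lam * |β| + |β| ^ 2 / (2 * sβ) + (lam - l0) ^ 2 / (2 * sl)
        + (β₀ ^ 2 - 2 * β₀ * β) / (2 * sβ) := by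
  rw [proxCost, sq_abs]
  ring

lemma proxCost_nonneg {sβ sl : ℝ} (hsβ : 0 < sβ) (hsl : 0 < sl) (β₀ l0 : ℝ) {lam : ℝ}
    (hlam : 0 ≤ lam) (β : ℝ) :
    0 ≤ proxCost sβ sl β₀ l0 lam β := by
  unfold proxCost
  positivity

theorem convexOn_proxCost {sβ sl : ℝ} (hsβ : 0 < sβ) (hsl : 0 < sl) (hprod : sβ * sl ≤ 1)
    (β₀ l0 : ℝ) : ConvexOn ℝ (Ici 0 ×ˢ univ) (uncurry (proxCost sβ sl β₀ l0)) := by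
  refine ⟨(convex_Ici 0).prod convex_univ, ?_⟩
  rintro ⟨x, p⟩ ⟨hx, -⟩ ⟨y, q⟩ ⟨hy, -⟩ a b ha hb hab
  simp only [Prod.smul_mk, Prod.mk_add_mk, smul_eq_mul, uncurry_apply_pair, proxCost_eq]
  set lam := a * x + b * y
  have hlam : 0 ≤ lam := add_nonneg (mul_nonneg ha hx) (mul_nonneg hb hy)
  have habs : |a * p + b * q| ≤ a * |p| + b * |q| :=
    (abs_add_le _ _).trans_eq (by rw [abs_mul, abs_mul, abs_of_nonneg ha, abs_of_nonneg hb])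
  have hmono : lam * |a * p + b * q| + |a * p + b * q| ^ 2 / (2 * sβ)
      ≤ lam * (a * |p| + b * |q|) + (a * |p| + b * |q|) ^ 2 / (2 * sβ) := by
    gcongr
  have hQ := (convexOn_mul_add_sq hsβ hsl hprod l0).2 (mem_univ (x, |p|)) (mem_univ (y, |q|))
    ha hb hab
  simp only [Prod.smul_mk, Prod.mk_add_mk, smul_eq_mul] at hQ
  obtain rfl : b = 1 - a := by linarith
  linear_combination hmono + hQ

/-- When s_β s_λ < 1, the marginal (profiled over β) proximal cost is convex in λ on [0,∞). -/
theorem stmt_5 (sβ sl β₀ l0 : ℝ) (hsβ : 0 < sβ) (hsl : 0 < sl)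
    (hprod : sβ * sl < 1) :
    ConvexOn ℝ (Set.Ici (0:ℝ))
      (fun lam => ⨅ β : ℝ, (lam * |β| + (β - β₀)^2 / (2*sβ) + (lam - l0)^2 / (2*sl))) :=
  (convexOn_proxCost hsβ hsl hprod.le β₀ l0).ciInf_snd fun _ hlam =>
    ⟨0, forall_mem_range.2 (proxCost_nonneg hsβ hsl β₀ l0 hlam)⟩
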